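/- arXiv:2509.00858 — 3 statements merged into one kernel-verified Lean document; each statement's English description precedes it below -/
import Mathlib

section
/- Let S be a Seidel matrix of order m (a real symmetric m×m matrix with zero diagonal and all off-diagonal entries ±1), let γ > 0 be a real number, and let r be an integer with 0 ≤ r < m. If (X + γ)^{m−r} divides the characteristic polynomial of S, then m·(γ² − r) ≤ r·(γ² − 1). -/
/-!
Let `λ₁, …, λₘ` be the eigenvalues of `S`, of which `t ≥ m - r` equal `-γ`. The trace identities
give `∑ λᵢ = 0` and `∑ λᵢ² = m(m-1)`, so the remaining `m - t` eigenvalues sum to `tγ` and their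
squares to `m(m-1) - tγ²`. Cauchy–Schwarz on them yields `tγ² ≤ (m - t)(m - 1)`, and the bound
follows from `t ≥ m - r`.
-/

open Polynomial Matrix Finset

theorem card_mul_card_mul_sq_le_of_sum_eq_zero {ι : Type*} [Fintype ι] [DecidableEq ι]
    {f : ι → ℝ} (hf : ∑ i, f i = 0) {s : Finset ι} {c : ℝ} (hs : ∀ i ∈ s, f i = c) :
    Fintype.card ι * #s * c ^ 2 ≤ (Fintype.card ι - #s) * ∑ i, f i ^ 2 := by
  have hs₁ : ∑ i ∈ s, f i = #s * c := by
    rw [sum_congr rfl hs, sum_const, nsmul_eq_mul]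
  have hs₂ : ∑ i ∈ s, f i ^ 2 = #s * c ^ 2 := by
    rw [sum_congr rfl fun i hi ↦ by rw [hs i hi], sum_const, nsmul_eq_mul]
  have hsum : ∑ i ∈ sᶜ, f i = -(#s * c) := by
    linarith [sum_compl_add_sum s f]
  have hsq : ∑ i ∈ sᶜ, f i ^ 2 = ∑ i, f i ^ 2 - #s * c ^ 2 := by
    linarith [sum_compl_add_sum s (fun i ↦ f i ^ 2)]
  have hcs := sq_sum_le_card_mul_sum_sq (s := sᶜ) (f := f)
  rw [hsum, hsq, card_compl, Nat.cast_sub (card_le_univ s)] at hcs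
  linear_combination hcs

structure Matrix.IsSeidel {n R : Type*} [Ring R] (S : Matrix n n R) : Prop where
  isSymm : S.IsSymm
  diag_eq_zero : ∀ i, S i i = 0
  eq_one_or_eq_neg_one : ∀ i j, i ≠ j → S i j = 1 ∨ S i j = -1

namespace Matrix.IsSeidel

variable {n R : Type*} [Fintype n] [Ring R] {S : Matrix n n R}

theorem trace_eq_zero (hS : S.IsSeidel) : S.trace = 0 := by
  simp [trace, hS.diag_eq_zero]

theorem mul_self_apply_self [DecidableEq n] (hS : S.IsSeidel) (i : n) :
    (S * S) i i = Fintype.card n - 1 := by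
  have hentry : ∀ j, S i j * S j i = 1 - if j = i then 1 else 0 := by
    intro j
    split_ifs with hji
    · simp [hji, hS.diag_eq_zero]
    · rw [hS.isSymm.apply i j]
      rcases hS.eq_one_or_eq_neg_one i j (Ne.symm hji) with h | h <;> simp [h]
  simp [mul_apply, hentry, sum_sub_distrib]

theorem trace_mul_self (hS : S.IsSeidel) :
    (S * S).trace = Fintype.card n * (Fintype.card n - 1) := by
  classical
  simp only [trace, diag_apply, hS.mul_self_apply_self, sum_const, card_univ, nsmul_eq_mul]

end Matrix.IsSeidel

namespace Matrix.IsHermitian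

variable {n 𝕜 : Type*} [Fintype n] [DecidableEq n] [RCLike 𝕜] {A : Matrix n n 𝕜}

theorem trace_mul_self_eq_sum_sq_eigenvalues (hA : A.IsHermitian) :
    (A * A).trace = ∑ i, (hA.eigenvalues i : 𝕜) ^ 2 := by
  conv_lhs => rw [hA.spectral_theorem, ← map_mul, Unitary.conjStarAlgAut_apply,
    trace_mul_cycle, Unitary.coe_star_mul_self, one_mul, diagonal_mul_diagonal, trace_diagonal]
  simp [sq]

theorem rootMultiplicity_charpoly (hA : A.IsHermitian) (μ : ℝ) :
    A.charpoly.rootMultiplicity (μ : 𝕜) = #{i | hA.eigenvalues i = μ} := by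
  classical
  rw [← count_roots, hA.roots_charpoly_eq_eigenvalues, Multiset.count_map]
  simp only [Function.comp_apply, algebraMap.coe_inj, eq_comm]
  rfl

end Matrix.IsHermitian

theorem stmt6_general (m : ℕ) (S : Matrix (Fin m) (Fin m) ℝ)
    (hsymm : S.IsSymm) (hdiag : ∀ i, S i i = 0)
    (hoff : ∀ i j, i ≠ j → S i j = 1 ∨ S i j = -1)
    (γ : ℝ) (r : ℕ) (hr : r < m)
    (hdvd : (X + C γ) ^ (m - r) ∣ S.charpoly) :
    (m : ℝ) * (γ ^ 2 - (r : ℝ)) ≤ (r : ℝ) * (γ ^ 2 - 1) := by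
  have hS : S.IsSeidel := ⟨hsymm, hdiag, hoff⟩
  have hH : S.IsHermitian := isHermitian_iff_isSymm.mpr hsymm
  set T : Finset (Fin m) := {i | hH.eigenvalues i = -γ}
  have hmult : m - r ≤ #T := by
    rw [← sub_neg_eq_add, ← map_neg] at hdvd
    have := (le_rootMultiplicity_iff S.charpoly_monic.ne_zero).mpr hdvd
    exact this.trans_eq (hH.rootMultiplicity_charpoly (-γ))
  have hsum : ∑ i, hH.eigenvalues i = 0 := by
    simpa [hS.trace_eq_zero] using hH.trace_eq_sum_eigenvalues.symm
  have hsq : ∑ i, hH.eigenvalues i ^ 2 = m * (m - 1) := by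
    simpa [hS.trace_mul_self] using hH.trace_mul_self_eq_sum_sq_eigenvalues.symm
  have hm : (1 : ℝ) ≤ m := Nat.one_le_cast.mpr (by omega)
  have hcs : #T * γ ^ 2 ≤ (m - #T) * (m - 1) := by
    have := card_mul_card_mul_sq_le_of_sum_eq_zero hsum (s := T) (c := -γ)
      fun i hi ↦ (mem_filter.mp hi).2
    rw [hsq, Fintype.card_fin, neg_sq] at this
    exact le_of_mul_le_mul_left (by linarith) (by linarith : (0 : ℝ) < m)
  have hT : (m : ℝ) - r ≤ #T := by
    rw [sub_le_iff_le_add]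
    exact_mod_cast (by omega : m ≤ #T + r)
  have : ((m : ℝ) - r) * γ ^ 2 ≤ r * (m - 1) := calc
    _ ≤ #T * γ ^ 2 := by gcongr
    _ ≤ (m - #T) * (m - 1) := hcs
    _ ≤ r * (m - 1) := by gcongr; linarith
  linarith

/-- the relative bound for a Seidel matrix of order `m`: if
`(X + γ)^(m-r)` divides the characteristic polynomial, then `m(γ² − r) ≤ r(γ² − 1)`. -/
theorem stmt6 (m : ℕ) (S : Matrix (Fin m) (Fin m) ℝ)
    (hsymm : S.IsSymm) (hdiag : ∀ i, S i i = 0)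
    (hoff : ∀ i j, i ≠ j → S i j = 1 ∨ S i j = -1)
    (γ : ℝ) (hγ : 0 < γ) (r : ℕ) (hr : r < m)
    (hdvd : (X + C γ) ^ (m - r) ∣ S.charpoly) :
    (m : ℝ) * (γ ^ 2 - (r : ℝ)) ≤ (r : ℝ) * (γ ^ 2 - 1) :=
  stmt6_general m S hsymm hdiag hoff γ r hr hdvd
end

section
/- Let −1 ≤ a < b < 1 with a + b ≥ 0, let d ≥ 1, n > d, and let v_1, …, v_n be unit vectors in ℝ^d such that ⟨v_i, v_j⟩ ∈ {a, b} for all i ≠ j. Let S = (2G − (a+b)·J + (a+b−2)·I)/(b − a), where G is the Gram matrix of the v_i and J is the all-ones matrix. Set c = (a + b − 2)/(b − a). Then (X − c)^{n−d−1} divides the characteristic polynomial of S, and, counting multiplicities, S has at most one eigenvalue strictly less than c. -/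
/-!
With `c = (a + b - 2) / (b - a)` one has `S - c • 1 = (2 G - (a + b) J) / (b - a)`: a positive
multiple of the Gram matrix of `n` vectors in `ℝ^d` (positive semidefinite, rank at most `d`)
plus a multiple of the all-ones matrix (rank at most one). So `S - c • 1` has rank at most
`d + 1`, and the geometric, hence algebraic, multiplicity of `c` is at least `n - d - 1`.
Moreover the quadratic form of `S - c • 1` is nonnegative on the hyperplane orthogonal to the
all-ones vector, which leaves room for at most one eigenvalue below `c`.
-/

open Polynomial Matrix Finset

namespace Matrix

section Rank

variable {K m ι : Type*} [Field K] [Fintype ι]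

theorem rank_add_le [Finite m] (A B : Matrix m ι K) : (A + B).rank ≤ A.rank + B.rank := by
  rw [rank, mulVecLin_add]
  exact (Submodule.finrank_mono (LinearMap.range_add_le _ _)).trans
    (Submodule.finrank_add_le_finrank_add_finrank _ _)

theorem rank_smul_le [Finite m] (r : K) (A : Matrix m ι K) : (r • A).rank ≤ A.rank := by
  rcases eq_or_ne r 0 with rfl | hr
  · simp
  · exact (rank_smul_of_mem_nonZeroDivisors A (mem_nonZeroDivisors_of_ne_zero hr)).le

theorem rank_gram_le {𝕜 E : Type*} [RCLike 𝕜] [NormedAddCommGroup E] [InnerProductSpace 𝕜 E]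
    [FiniteDimensional 𝕜 E] (v : ι → E) : (gram 𝕜 v).rank ≤ Module.finrank 𝕜 E := by
  rw [gram_eq_conjTranspose_mul (stdOrthonormalBasis 𝕜 E) v]
  exact (rank_mul_le_right _ _).trans ((rank_le_card_height _).trans (by simp))

variable [DecidableEq ι]

theorem card_sub_rank_le_rootMultiplicity (A : Matrix ι ι K) (μ : K) :
    Fintype.card ι - (A - μ • 1).rank ≤ A.charpoly.rootMultiplicity μ := by
  have hker : Module.End.eigenspace (toLin' A) μ = LinearMap.ker (A - μ • 1).mulVecLin := by
    rw [Module.End.eigenspace_def]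
    congr 1
    ext x i
    simp
  have hrank := LinearMap.finrank_range_add_finrank_ker (A - μ • 1).mulVecLin
  have hgeom := LinearMap.finrank_eigenspace_le (toLin' A) μ
  rw [charpoly_toLin', hker] at hgeom
  rw [rank]
  simp only [Module.finrank_fintype_fun_eq_card] at hrank
  omega

theorem pow_card_sub_rank_dvd_charpoly (A : Matrix ι ι K) (μ : K) :
    (X - C μ) ^ (Fintype.card ι - (A - μ • 1).rank) ∣ A.charpoly :=
  (le_rootMultiplicity_iff A.charpoly_monic.ne_zero).mp (card_sub_rank_le_rootMultiplicity A μ)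

end Rank

section Spectrum

variable {ι : Type*} [Fintype ι]

theorem dotProduct_mulVec_smul_add_smul {A : Matrix ι ι ℝ} {e f : ι → ℝ} {r s : ℝ}
    (he : A *ᵥ e = r • e) (hf : A *ᵥ f = s • f)
    (hee : e ⬝ᵥ e = 1) (hff : f ⬝ᵥ f = 1) (hef : e ⬝ᵥ f = 0) (α β : ℝ) :
    (α • e + β • f) ⬝ᵥ A *ᵥ (α • e + β • f) = α ^ 2 * r + β ^ 2 * s := by
  have hfe : f ⬝ᵥ e = 0 := by rwa [dotProduct_comm]
  simp only [mulVec_add, mulVec_smul, he, hf, add_dotProduct, dotProduct_add, smul_dotProduct,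
    dotProduct_smul, hee, hff, hef, hfe, smul_eq_mul]
  ring

variable [DecidableEq ι] {A : Matrix ι ι ℝ}

theorem IsHermitian.dotProduct_eigenvectorBasis (hA : A.IsHermitian) (k l : ι) :
    ⇑(hA.eigenvectorBasis k) ⬝ᵥ ⇑(hA.eigenvectorBasis l) = if k = l then 1 else 0 := by
  simpa [PiLp.inner_apply, dotProduct, mul_comm] using
    orthonormal_iff_ite.mp hA.eigenvectorBasis.orthonormal k l

theorem IsHermitian.card_roots_charpoly_filter_lt (hA : A.IsHermitian) (c : ℝ) :
    Multiset.card (A.charpoly.roots.filter (· < c)) = #{i | hA.eigenvalues i < c} := by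
  rw [hA.roots_charpoly_eq_eigenvalues, Multiset.filter_map, Multiset.card_map]
  rfl

theorem IsHermitian.card_eigenvalues_lt_le_one (hA : A.IsHermitian) (u : ι → ℝ) {c : ℝ}
    (h : ∀ x, u ⬝ᵥ x = 0 → c * (x ⬝ᵥ x) ≤ x ⬝ᵥ A *ᵥ x) :
    #{i | hA.eigenvalues i < c} ≤ 1 := by
  by_contra! hcard
  obtain ⟨i, hi, j, hj, hij⟩ := one_lt_card.mp hcard
  simp only [mem_filter, mem_univ, true_and] at hi hj
  set e : ι → ℝ := ⇑(hA.eigenvectorBasis i)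
  set f : ι → ℝ := ⇑(hA.eigenvectorBasis j)
  -- some nonzero combination of the two eigenvectors is orthogonal to `u`
  obtain ⟨α, β, hu, hαβ⟩ : ∃ α β : ℝ, u ⬝ᵥ (α • e + β • f) = 0 ∧ (α ≠ 0 ∨ β ≠ 0) := by
    simp only [dotProduct_add, dotProduct_smul, smul_eq_mul]
    by_cases he : u ⬝ᵥ e = 0
    · exact ⟨1, 0, by simp [he], by simp⟩
    · exact ⟨u ⬝ᵥ f, -(u ⬝ᵥ e), by ring, Or.inr (neg_ne_zero.mpr he)⟩
  have hdot := hA.dotProduct_eigenvectorBasis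
  have hee : e ⬝ᵥ e = 1 := by simpa using hdot i i
  have hff : f ⬝ᵥ f = 1 := by simpa using hdot j j
  have hef : e ⬝ᵥ f = 0 := by simpa [hij] using hdot i j
  have hquad := dotProduct_mulVec_smul_add_smul (hA.mulVec_eigenvectorBasis i)
    (hA.mulVec_eigenvectorBasis j) hee hff hef α β
  have hnorm := dotProduct_mulVec_smul_add_smul (A := 1) (r := 1) (s := 1)
    (by simp) (by simp) hee hff hef α β
  rw [one_mulVec] at hnorm
  have hle := h _ hu
  rw [hquad, hnorm] at hle
  rcases hαβ with hα | hβ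
  · nlinarith [sq_nonneg β, sq_pos_of_ne_zero hα]
  · nlinarith [sq_nonneg α, sq_pos_of_ne_zero hβ]

end Spectrum

section GramPlusOnes

variable {ι E : Type*} [Fintype ι] [NormedAddCommGroup E] [InnerProductSpace ℝ E]
  (v : ι → E) (p q : ℝ)

theorem rank_smul_gram_add_smul_ones_le [FiniteDimensional ℝ E] :
    (p • gram ℝ v + q • vecMulVec 1 1).rank ≤ Module.finrank ℝ E + 1 :=
  (rank_add_le _ _).trans (add_le_add ((rank_smul_le _ _).trans (rank_gram_le v))
    ((rank_smul_le _ _).trans (rank_vecMulVec_le _ _)))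

theorem isHermitian_smul_gram_add_smul_ones :
    (p • gram ℝ v + q • vecMulVec 1 1).IsHermitian := by
  have hones : (vecMulVec 1 1 : Matrix ι ι ℝ).IsHermitian := by
    simpa using (posSemidef_vecMulVec_self_star (1 : ι → ℝ)).isHermitian
  exact ((isHermitian_gram ℝ v).smul (.all p)).add (hones.smul (.all q))

theorem dotProduct_mulVec_smul_gram_add_smul_ones_nonneg (hp : 0 ≤ p) {x : ι → ℝ}
    (hx : 1 ⬝ᵥ x = 0) : 0 ≤ x ⬝ᵥ (p • gram ℝ v + q • vecMulVec 1 1) *ᵥ x := by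
  have hgram : 0 ≤ x ⬝ᵥ gram ℝ v *ᵥ x := by
    simpa using (posSemidef_gram ℝ v).dotProduct_mulVec_nonneg x
  rw [add_mulVec, smul_mulVec, smul_mulVec, vecMulVec_mulVec, hx, MulOpposite.op_zero, zero_smul,
    smul_zero, add_zero, dotProduct_smul, smul_eq_mul]
  exact mul_nonneg hp hgram

end GramPlusOnes

end Matrix

theorem stmt8_general (d n : ℕ)
    (a b : ℝ) (hab : a < b)
    (v : Fin n → EuclideanSpace ℝ (Fin d))
    (G J S : Matrix (Fin n) (Fin n) ℝ)
    (hG : ∀ i j, G i j = (inner ℝ (v i) (v j) : ℝ))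
    (hJ : ∀ i j, J i j = 1)
    (hS : S = (b - a)⁻¹ •
      ((2 : ℝ) • G - (a + b) • J + (a + b - 2) • (1 : Matrix (Fin n) (Fin n) ℝ)))
    (c : ℝ) (hc : c = (a + b - 2) / (b - a)) :
    (X - C c) ^ (n - d - 1) ∣ S.charpoly ∧
      Multiset.card (S.charpoly.roots.filter (fun x => x < c)) ≤ 1 := by
  set M := ((b - a)⁻¹ * 2) • gram ℝ v + ((b - a)⁻¹ * -(a + b)) • vecMulVec 1 1
  have hSM : S = c • 1 + M := by
    have hGram : G = gram ℝ v := Matrix.ext fun i j => by rw [hG, gram_apply]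
    have hJones : J = vecMulVec 1 1 := Matrix.ext fun i j => by simp [hJ, vecMulVec_apply]
    rw [hS, hc, hGram, hJones]
    module
  have hH : S.IsHermitian :=
    hSM ▸ (isHermitian_one.smul (.all c)).add (isHermitian_smul_gram_add_smul_ones v _ _)
  constructor
  · have hrank : (S - c • 1).rank ≤ d + 1 := by
      rw [hSM, add_sub_cancel_left]
      exact (rank_smul_gram_add_smul_ones_le v _ _).trans_eq (by simp)
    exact (pow_dvd_pow _ (by rw [Fintype.card_fin]; omega)).trans
      (pow_card_sub_rank_dvd_charpoly S c)
  · rw [hH.card_roots_charpoly_filter_lt]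
    refine hH.card_eigenvalues_lt_le_one 1 fun x hx => ?_
    have hM := dotProduct_mulVec_smul_gram_add_smul_ones_nonneg v ((b - a)⁻¹ * 2)
      ((b - a)⁻¹ * -(a + b)) (mul_nonneg (inv_nonneg.2 (sub_pos.2 hab).le) zero_le_two) hx
    rw [hSM, add_mulVec, dotProduct_add, smul_mulVec, one_mulVec, dotProduct_smul, smul_eq_mul]
    linarith

/-- for a spherical two-distance set with `a + b ≥ 0`, the Seidel
matrix `S` has eigenvalue `c = (a+b−2)/(b−a)` with multiplicity at least `n−d−1`,
and at most one eigenvalue (with multiplicity) strictly below `c`. -/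
theorem stmt8 (d n : ℕ) (hd : 1 ≤ d) (hn : d < n)
    (a b : ℝ) (ha : -1 ≤ a) (hab : a < b) (hb : b < 1) (hsum : 0 ≤ a + b)
    (v : Fin n → EuclideanSpace ℝ (Fin d))
    (hunit : ∀ i, ‖v i‖ = 1)
    (hinner : ∀ i j, i ≠ j →
      (inner ℝ (v i) (v j) : ℝ) = a ∨ (inner ℝ (v i) (v j) : ℝ) = b)
    (G J S : Matrix (Fin n) (Fin n) ℝ)
    (hG : ∀ i j, G i j = (inner ℝ (v i) (v j) : ℝ))
    (hJ : ∀ i j, J i j = 1)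
    (hS : S = (b - a)⁻¹ •
      ((2 : ℝ) • G - (a + b) • J + (a + b - 2) • (1 : Matrix (Fin n) (Fin n) ℝ)))
    (c : ℝ) (hc : c = (a + b - 2) / (b - a)) :
    (X - C c) ^ (n - d - 1) ∣ S.charpoly ∧
      Multiset.card (S.charpoly.roots.filter (fun x => x < c)) ≤ 1 :=
  stmt8_general d n a b hab v G J S hG hJ hS c hc
end

section
/- Let m ≥ 1 and d ≥ 1 be integers with d < (2m+1)², and let −1 ≤ a < b < 1 satisfy a + b ≥ 0 and (2 − a − b)/(b − a) > 2m + 1. If v_1, …, v_n are unit vectors in ℝ^d such that ⟨v_i, v_j⟩ ∈ {a, b} for all i ≠ j, then n ≤ 4·d·m·(m+1)/((2m+1)² − d). -/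
/-!
Let `G` be the Gram matrix of the `vᵢ` and `w = ∑ vᵢ`. Since `(Gᵢⱼ - a)(Gᵢⱼ - b)` vanishes off the
diagonal, `‖G‖²_F = n(1-a)(1-b) + (a+b)‖w‖² - abn²`, and the Gram matrix of vectors spanning a
space of dimension `r` satisfies `(tr G)² ≤ r ‖G‖²_F`. If `d‖w‖² ≤ n²`, this with `r = d` already
gives the relative bound `n((2-a-b)² - d(b-a)²) ≤ d((2-a-b)² - (b-a)²)`. Otherwise apply it with
`r = d - 1` to the projections of the `vᵢ` onto `wᗮ`, keeping the direction of `w` apart; as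
`∑ ⟪vᵢ, w⟫ = ‖w‖²`, Cauchy–Schwarz bounds that direction's share of `tr G` from below, and
eliminating `‖w‖²` gives the relative bound again. The theorem follows because the relative bound
decreases in `(2-a-b)/(b-a)`, which exceeds `2m+1`.
-/

open Finset Module RealInnerProductSpace

theorem sum_sum_sq_eq_of_two_distance {ι : Type*} [Fintype ι] {G : ι → ι → ℝ} {a b : ℝ}
    (hdiag : ∀ i, G i i = 1) (hoff : ∀ i j, i ≠ j → G i j = a ∨ G i j = b) :
    ∑ i, ∑ j, G i j ^ 2 = Fintype.card ι * (1 - a) * (1 - b) + (a + b) * ∑ i, ∑ j, G i j -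
      a * b * Fintype.card ι ^ 2 := by
  have hrow : ∀ i, ∑ j, (G i j - a) * (G i j - b) = (1 - a) * (1 - b) := by
    intro i
    rw [sum_eq_single i (fun j _ hji => ?_) (by simp), hdiag]
    rcases hoff i j hji.symm with h | h <;> simp [h]
  have hexpand : ∑ i, ∑ j, (G i j - a) * (G i j - b) =
      ∑ i, ∑ j, G i j ^ 2 - (a + b) * ∑ i, ∑ j, G i j + a * b * Fintype.card ι ^ 2 := by
    simp only [show ∀ g, (g - a) * (g - b) = g ^ 2 - (a + b) * g + a * b from fun g => by ring,
      sum_add_distrib, sum_sub_distrib, ← mul_sum, sum_const, card_univ, nsmul_eq_mul]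
    ring
  simp only [hrow, sum_const, card_univ, nsmul_eq_mul] at hexpand
  linarith

theorem relative_bound_of_trace_bound {n D s a b : ℝ} (hn : 0 < n) (hD : 1 ≤ D)
    (hsum : 0 ≤ a + b) (hs : D * s ≤ n ^ 2)
    (h : n ^ 2 ≤ D * (n * (1 - a) * (1 - b) + (a + b) * s - a * b * n ^ 2)) :
    n * ((2 - a - b) ^ 2 - D * (b - a) ^ 2) ≤ D * ((2 - a - b) ^ 2 - (b - a) ^ 2) := by
  refine le_of_mul_le_mul_left ?_ hn
  nlinarith [mul_le_mul_of_nonneg_left hs hsum,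
    mul_nonneg (sub_nonneg.2 hD) (sq_nonneg (n * (a + b)))]

theorem relative_bound_of_projected_trace_bound {n D s ρ a b : ℝ} (hn : 0 < n) (hD : 1 < D)
    (hs : n ^ 2 < D * s) (hρ : s ≤ ρ * n)
    (h : (n - ρ) ^ 2 + (D - 1) * ρ ^ 2 ≤
      (D - 1) * (n * (1 - a) * (1 - b) + (a + b) * s - a * b * n ^ 2)) :
    n * ((2 - a - b) ^ 2 - D * (b - a) ^ 2) ≤ D * ((2 - a - b) ^ 2 - (b - a) ^ 2) := by
  -- `ρ ↦ (n - ρ) ^ 2 + (D - 1) * ρ ^ 2` increases for `ρ ≥ n / D`, and `ρ ≥ s / n > n / D`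
  have hmono : (n ^ 2 - s) ^ 2 + (D - 1) * s ^ 2 ≤
      (D - 1) * n ^ 2 * (n * (1 - a) * (1 - b) + (a + b) * s - a * b * n ^ 2) := by
    nlinarith [mul_nonneg (sub_nonneg.2 hρ) (by nlinarith : 0 ≤ D * (ρ * n + s) - 2 * n ^ 2),
      mul_le_mul_of_nonneg_left h (sq_nonneg n)]
  have hpos : 0 < (D - 1) * n ^ 3 := by have := sub_pos.2 hD; positivity
  refine le_of_mul_le_mul_left ?_ hpos
  -- `hmono` says a quadratic in `s` is nonpositive somewhere, so its discriminant is nonnegative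
  nlinarith [mul_le_mul_of_nonneg_left hmono (by linarith : (0 : ℝ) ≤ D),
    sq_nonneg (2 * D * s - n ^ 2 * (2 + (a + b) * (D - 1)))]

theorem le_div_of_relative_bound {n D K x y : ℝ} (hD : 1 ≤ D) (hDK : D < K ^ 2) (hK : 0 ≤ K)
    (hy : 0 < y) (hxy : K * y < x)
    (h : n * (x ^ 2 - D * y ^ 2) ≤ D * (x ^ 2 - y ^ 2)) :
    n ≤ D * (K ^ 2 - 1) / (K ^ 2 - D) := by
  have hKx : K ^ 2 * y ^ 2 < x ^ 2 := by nlinarith [mul_nonneg hK hy.le]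
  have hx : 0 < x ^ 2 - D * y ^ 2 := by nlinarith [mul_lt_mul_of_pos_right hDK (pow_pos hy 2)]
  rw [le_div_iff₀ (sub_pos.2 hDK)]
  refine le_of_mul_le_mul_right ?_ hx
  nlinarith [mul_le_mul_of_nonneg_left h (sub_pos.2 hDK).le,
    mul_nonneg (mul_nonneg (by linarith : 0 ≤ D) (sub_nonneg.2 hD)) (sub_pos.2 hKx).le]

section InnerProductSpace

variable {E : Type*} [NormedAddCommGroup E] [InnerProductSpace ℝ E] {ι : Type*} [Fintype ι]

theorem sum_sum_mul_inner_eq_norm_sum_sq (u : ι → E) (p : ι → ℝ) :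
    ∑ i, ∑ j, p i * p j * ⟪u i, u j⟫ = ‖∑ i, p i • u i‖ ^ 2 := by
  simp only [← real_inner_self_eq_norm_sq, sum_inner, inner_sum, real_inner_smul_left,
    real_inner_smul_right]
  exact sum_congr rfl fun i _ => sum_congr rfl fun j _ => by rw [real_inner_comm]; ring

theorem sq_sum_norm_sq_le_finrank_mul_sum_sum_inner_sq [FiniteDimensional ℝ E] (u : ι → E) :
    (∑ i, ‖u i‖ ^ 2) ^ 2 ≤ finrank ℝ E * ∑ i, ∑ j, ⟪u i, u j⟫ ^ 2 := by
  set e := stdOrthonormalBasis ℝ E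
  -- `y x` is the frame operator `∑ ⟪uᵢ, ·⟫ uᵢ` applied to `e x`; its trace is `∑ ‖uᵢ‖²` and its
  -- squared Hilbert–Schmidt norm is `∑ ⟪uᵢ, uⱼ⟫²`
  set y : Fin (finrank ℝ E) → E := fun x => ∑ i, ⟪u i, e x⟫ • u i
  have htrace : ∑ i, ‖u i‖ ^ 2 = ∑ x, ⟪e x, y x⟫ := by
    simp only [y, inner_sum, real_inner_smul_right, ← e.sum_sq_inner_right]
    rw [sum_comm]
    exact sum_congr rfl fun i _ => sum_congr rfl fun x _ => by rw [real_inner_comm]; ring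
  have hfrob : ∑ x, ‖y x‖ ^ 2 = ∑ i, ∑ j, ⟪u i, u j⟫ ^ 2 := by
    simp only [y, ← sum_sum_mul_inner_eq_norm_sum_sq]
    rw [sum_comm]
    refine sum_congr rfl fun i _ => ?_
    rw [sum_comm]
    refine sum_congr rfl fun j _ => ?_
    rw [← sum_mul, ← e.sum_inner_mul_inner (u i) (u j), sq]
    exact congrArg (· * _) (sum_congr rfl fun x _ => by rw [real_inner_comm (e x) (u j)])
  calc (∑ i, ‖u i‖ ^ 2) ^ 2 = (∑ x, ⟪e x, y x⟫) ^ 2 := by rw [htrace]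
    _ ≤ finrank ℝ E * ∑ x, ⟪e x, y x⟫ ^ 2 := by
      simpa using sq_sum_le_card_mul_sum_sq (s := univ) (f := fun x => ⟪e x, y x⟫)
    _ ≤ finrank ℝ E * ∑ x, ‖y x‖ ^ 2 := by
      gcongr _ * ?_
      refine sum_le_sum fun x _ => ?_
      simpa [sq, e.orthonormal.1 x] using real_inner_mul_inner_self_le (e x) (y x)
    _ = finrank ℝ E * ∑ i, ∑ j, ⟪u i, u j⟫ ^ 2 := by rw [hfrob]

/-- The trace bound on `wᗮ` for the components `uᵢ - ⟪uᵢ, w⟫ w`; the direction `w` carries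
`ρ = ∑ ⟪uᵢ, w⟫²` of `∑ ‖uᵢ‖²` and at least `ρ²` of `∑ ⟪uᵢ, uⱼ⟫²`. -/
theorem sq_sum_norm_sq_sub_add_le_of_norm_eq_one [FiniteDimensional ℝ E] (u : ι → E) {w : E}
    (hw : ‖w‖ = 1) :
    (∑ i, ‖u i‖ ^ 2 - ∑ i, ⟪u i, w⟫ ^ 2) ^ 2 + (finrank ℝ E - 1) * (∑ i, ⟪u i, w⟫ ^ 2) ^ 2 ≤
      (finrank ℝ E - 1) * ∑ i, ∑ j, ⟪u i, u j⟫ ^ 2 := by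
  set p : ι → ℝ := fun i => ⟪u i, w⟫
  have hww : ⟪w, w⟫ = 1 := by rw [real_inner_self_eq_norm_sq, hw, one_pow]
  let c : ι → (ℝ ∙ w)ᗮ := fun i => ⟨u i - p i • w, by
    rw [Submodule.mem_orthogonal_singleton_iff_inner_right, inner_sub_right,
      real_inner_smul_right, hww, real_inner_comm, mul_one, sub_self]⟩
  have hdecomp : ∀ i j, ⟪u i, u j⟫ = ⟪c i, c j⟫ + p i * p j := by
    intro i j
    simp only [c, Submodule.coe_inner, inner_sub_left, inner_sub_right, real_inner_smul_left,
      real_inner_smul_right, hww, p, real_inner_comm w]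
    ring
  have hfinrank : (finrank ℝ (ℝ ∙ w)ᗮ : ℝ) = finrank ℝ E - 1 := by
    have hw0 : w ≠ 0 := by rintro rfl; simp at hw
    rw [← (ℝ ∙ w).finrank_add_finrank_orthogonal, finrank_span_singleton hw0]
    push_cast; ring
  have hnorm : ∑ i, ‖u i‖ ^ 2 = ∑ i, ‖c i‖ ^ 2 + ∑ i, p i ^ 2 := by
    simp only [← real_inner_self_eq_norm_sq, hdecomp, ← sq, sum_add_distrib]
  have hfrob : ∑ i, ∑ j, ⟪c i, c j⟫ ^ 2 + (∑ i, p i ^ 2) ^ 2 ≤ ∑ i, ∑ j, ⟪u i, u j⟫ ^ 2 := by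
    have hcross : 0 ≤ ∑ i, ∑ j, p i * p j * ⟪c i, c j⟫ := by
      rw [sum_sum_mul_inner_eq_norm_sum_sq]; positivity
    have hexpand : ∑ i, ∑ j, ⟪u i, u j⟫ ^ 2 = ∑ i, ∑ j, ⟪c i, c j⟫ ^ 2 +
        2 * ∑ i, ∑ j, p i * p j * ⟪c i, c j⟫ + (∑ i, p i ^ 2) ^ 2 := by
      rw [sq (∑ i, p i ^ 2), sum_mul_sum, mul_sum]
      simp only [mul_sum, ← sum_add_distrib]
      exact sum_congr rfl fun i _ => sum_congr rfl fun j _ => by rw [hdecomp]; ring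
    linarith
  have htrace := sq_sum_norm_sq_le_finrank_mul_sum_sum_inner_sq c
  rw [hfinrank] at htrace
  have hD : (0 : ℝ) ≤ finrank ℝ E - 1 := hfinrank ▸ Nat.cast_nonneg _
  rw [hnorm, add_sub_cancel_right]
  nlinarith [mul_le_mul_of_nonneg_left hfrob hD]

theorem card_mul_le_finrank_mul_of_two_distance [FiniteDimensional ℝ E] [Nonempty ι] {a b : ℝ}
    (hsum : 0 ≤ a + b) (v : ι → E) (hunit : ∀ i, ‖v i‖ = 1)
    (hinner : ∀ i j, i ≠ j → ⟪v i, v j⟫ = a ∨ ⟪v i, v j⟫ = b) :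
    Fintype.card ι * ((2 - a - b) ^ 2 - finrank ℝ E * (b - a) ^ 2) ≤
      finrank ℝ E * ((2 - a - b) ^ 2 - (b - a) ^ 2) := by
  set n : ℝ := (Fintype.card ι : ℝ)
  set D : ℝ := (finrank ℝ E : ℝ)
  set w := ∑ i, v i
  have hn : 0 < n := by simp [n, Fintype.card_pos]
  have hD : 1 ≤ D := by
    have : Nontrivial E := nontrivial_of_ne (v (Classical.arbitrary ι)) 0
      (norm_ne_zero_iff.1 (by simp [hunit]))
    exact Nat.one_le_cast.2 finrank_pos
  have hsum_norm : ∑ i, ‖v i‖ ^ 2 = n := by simp [hunit, n]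
  have hT : ∑ i, ∑ j, ⟪v i, v j⟫ ^ 2 =
      n * (1 - a) * (1 - b) + (a + b) * ‖w‖ ^ 2 - a * b * n ^ 2 := by
    have hgram_sum : ∑ i, ∑ j, ⟪v i, v j⟫ = ‖w‖ ^ 2 := by
      simpa using sum_sum_mul_inner_eq_norm_sum_sq v 1
    rw [sum_sum_sq_eq_of_two_distance (fun i => by rw [real_inner_self_eq_norm_sq, hunit, one_pow])
      hinner, hgram_sum]
  by_cases hs : D * ‖w‖ ^ 2 ≤ n ^ 2
  · have htrace := sq_sum_norm_sq_le_finrank_mul_sum_sum_inner_sq v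
    rw [hsum_norm, hT] at htrace
    exact relative_bound_of_trace_bound hn hD hsum hs htrace
  push Not at hs
  have hw : w ≠ 0 := by rintro hw; simp [hw] at hs; nlinarith
  have hwn : ‖w‖ ^ 2 ≤ n ^ 2 := by
    gcongr
    calc ‖w‖ ≤ ∑ i, ‖v i‖ := norm_sum_le _ _
      _ = n := by simp [hunit, n]
  have hD_gt : 1 < D := by
    by_contra! h
    nlinarith [mul_le_mul_of_nonneg_right h (sq_nonneg ‖w‖)]
  set ŵ : E := ‖w‖⁻¹ • w
  have hŵ : ‖ŵ‖ = 1 := by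
    rw [norm_smul, norm_inv, norm_norm, inv_mul_cancel₀ (norm_ne_zero_iff.2 hw)]
  have hproj := sq_sum_norm_sq_sub_add_le_of_norm_eq_one v hŵ
  rw [hsum_norm, hT] at hproj
  have hρ : ‖w‖ ^ 2 ≤ (∑ i, ⟪v i, ŵ⟫ ^ 2) * n := by
    have hw_sum : ∑ i, ⟪v i, ŵ⟫ = ‖w‖ := by
      rw [← sum_inner, real_inner_smul_right, real_inner_self_eq_norm_sq, sq,
        inv_mul_cancel_left₀ (norm_ne_zero_iff.2 hw)]
    simpa [hw_sum, mul_comm] using sq_sum_le_card_mul_sum_sq (s := univ) (f := fun i => ⟪v i, ŵ⟫)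
  exact relative_bound_of_projected_trace_bound hn hD_gt hs hρ hproj

end InnerProductSpace

theorem stmt12_general (m d n : ℕ) (hd : 1 ≤ d) (hdm : d < (2 * m + 1) ^ 2)
    (a b : ℝ) (hab : a < b) (hsum : 0 ≤ a + b)
    (hγ : (2 - a - b) / (b - a) > 2 * (m : ℝ) + 1)
    (v : Fin n → EuclideanSpace ℝ (Fin d))
    (hunit : ∀ i, ‖v i‖ = 1)
    (hinner : ∀ i j, i ≠ j →
      (inner ℝ (v i) (v j) : ℝ) = a ∨ (inner ℝ (v i) (v j) : ℝ) = b) :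
    (n : ℝ) ≤ 4 * (d : ℝ) * (m : ℝ) * ((m : ℝ) + 1) /
      ((2 * (m : ℝ) + 1) ^ 2 - (d : ℝ)) := by
  have hdK : (d : ℝ) < (2 * m + 1) ^ 2 := by exact_mod_cast hdm
  have hnum : 4 * (d : ℝ) * m * (m + 1) = d * ((2 * m + 1) ^ 2 - 1) := by ring
  rcases Nat.eq_zero_or_pos n with rfl | hn
  · rw [Nat.cast_zero]; exact div_nonneg (by positivity) (sub_pos.2 hdK).le
  have : Nonempty (Fin n) := ⟨⟨0, hn⟩⟩
  have key := card_mul_le_finrank_mul_of_two_distance hsum v hunit hinner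
  rw [Fintype.card_fin, finrank_euclideanSpace_fin] at key
  rw [hnum]
  exact le_div_of_relative_bound (by exact_mod_cast hd) hdK (by positivity) (sub_pos.2 hab)
    ((lt_div_iff₀ (sub_pos.2 hab)).1 hγ) key

/-- for a spherical two-distance set with `a + b ≥ 0`,
`(2−a−b)/(b−a) > 2m+1` and `d < (2m+1)²`, one has `n ≤ 4dm(m+1)/((2m+1)² − d)`. -/
theorem stmt12 (m d n : ℕ) (hm : 1 ≤ m) (hd : 1 ≤ d) (hdm : d < (2 * m + 1) ^ 2)
    (a b : ℝ) (ha : -1 ≤ a) (hab : a < b) (hb : b < 1) (hsum : 0 ≤ a + b)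
    (hγ : (2 - a - b) / (b - a) > 2 * (m : ℝ) + 1)
    (v : Fin n → EuclideanSpace ℝ (Fin d))
    (hunit : ∀ i, ‖v i‖ = 1)
    (hinner : ∀ i j, i ≠ j →
      (inner ℝ (v i) (v j) : ℝ) = a ∨ (inner ℝ (v i) (v j) : ℝ) = b) :
    (n : ℝ) ≤ 4 * (d : ℝ) * (m : ℝ) * ((m : ℝ) + 1) /
      ((2 * (m : ℝ) + 1) ^ 2 - (d : ℝ)) :=
  stmt12_general m d n hd hdm a b hab hsum hγ v hunit hinner
end
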